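/- Level-regular trace languages are not closed under concatenation: with Σ = {a,b,c} and D = {(a,a),(b,b),(c,c)} (all distinct letters independent), the trace languages [(ab)*] and [(bc)*] are level-regular, but their concatenation [(ab)*]·[(bc)*] is not level-regular, since the set of Foata normal forms of its elements, {{a,b,c}^k {b,c}* {b}^k : k ≥ 0} ∪ {{a,b,c}^k {a,b}* {b}^k : k ≥ 0}, is not a regular word language. -/

import Mathlib

variable {α : Type*}

/-- One commutation step: swap two adjacent independent letters. -/
inductive TraceStep (D : α → α → Prop) : List α → List α → Prop
  | swap (x y : List α) (a b : α) (h : ¬ D a b) :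
      TraceStep D (x ++ a :: b :: y) (x ++ b :: a :: y)

/-- Trace equivalence: the least congruence with `ab ≡ ba` for independent `a b`. -/
abbrev TraceEquiv (D : α → α → Prop) : List α → List α → Prop :=
  Relation.EqvGen (TraceStep D)

theorem TraceStep.append_right {D : α → α → Prop} {u u' : List α}
    (h : TraceStep D u u') (v : List α) : TraceStep D (u ++ v) (u' ++ v) := by
  cases h with
  | swap x y a b hab =>
    simpa [List.append_assoc] using TraceStep.swap (D := D) x (y ++ v) a b hab

theorem TraceStep.append_left {D : α → α → Prop} {u u' : List α}
    (h : TraceStep D u u') (v : List α) : TraceStep D (v ++ u) (v ++ u') := by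
  cases h with
  | swap x y a b hab =>
    simpa [List.append_assoc] using TraceStep.swap (D := D) (v ++ x) y a b hab

theorem TraceEquiv.append_right {D : α → α → Prop} {u u' : List α}
    (h : TraceEquiv D u u') (v : List α) : TraceEquiv D (u ++ v) (u' ++ v) := by
  induction h with
  | rel a b hab => exact .rel _ _ (hab.append_right v)
  | refl a => exact .refl _
  | symm a b _ ih => exact .symm _ _ ih
  | trans a b c _ _ ih1 ih2 => exact .trans _ _ _ ih1 ih2

theorem TraceEquiv.append_left {D : α → α → Prop} {u u' : List α}
    (h : TraceEquiv D u u') (v : List α) : TraceEquiv D (v ++ u) (v ++ u') := by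
  induction h with
  | rel a b hab => exact .rel _ _ (hab.append_left v)
  | refl a => exact .refl _
  | symm a b _ ih => exact .symm _ _ ih
  | trans a b c _ _ ih1 ih2 => exact .trans _ _ _ ih1 ih2

theorem TraceEquiv.append {D : α → α → Prop} {u u' v v' : List α}
    (h1 : TraceEquiv D u u') (h2 : TraceEquiv D v v') :
    TraceEquiv D (u ++ v) (u' ++ v') :=
  .trans _ _ _ (h1.append_right v) (h2.append_left u')

/-- The trace monoid `M(Σ,D)` as a quotient of the free monoid. -/
def Trace (D : α → α → Prop) : Type _ :=
  Quotient (Relation.EqvGen.setoid (TraceStep D))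

/-- The trace of a word. -/
def Trace.mk (D : α → α → Prop) (u : List α) : Trace D :=
  Quotient.mk (Relation.EqvGen.setoid (TraceStep D)) u

instance traceMonoid (D : α → α → Prop) : Monoid (Trace D) where
  mul := Quotient.map₂ (· ++ ·) fun _ _ h _ _ h' => TraceEquiv.append h h'
  one := Trace.mk D []
  mul_assoc a b c := Quotient.inductionOn₃ a b c fun a b c =>
    congrArg (Quotient.mk _) (List.append_assoc a b c)
  one_mul a := Quotient.inductionOn a fun a => congrArg (Quotient.mk _) (List.nil_append a)
  mul_one a := Quotient.inductionOn a fun a => congrArg (Quotient.mk _) (List.append_nil a)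

theorem Trace.mk_mul (D : α → α → Prop) (u v : List α) :
    Trace.mk D u * Trace.mk D v = Trace.mk D (u ++ v) := rfl

/-- `I_D⁻`: nonempty sets of pairwise independent letters (independence cliques). -/
def Clique (D : α → α → Prop) : Type _ :=
  {A : Finset α // A.Nonempty ∧ ∀ a ∈ A, ∀ b ∈ A, a ≠ b → ¬ D a b}

/-- `A ▷ B` : every letter of `B` depends on some letter of `A`. -/
def Rhd (D : α → α → Prop) (A B : Clique D) : Prop :=
  ∀ b ∈ B.1, ∃ a ∈ A.1, D a b

/-- The set of Foata normal forms: words `A₁ ⋯ A_p` over `I_D⁻` with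
`A_i ▷ A_{i+1}` for all `i`. -/
def Foata (D : α → α → Prop) : Language (Clique D) :=
  {w | w.Chain' (Rhd D)}

/-- The canonical morphism `Π : (I_D⁻)* → Σ*` (composed with `[·]` it gives
the canonical morphism to `M(Σ,D)`): each clique is mapped to the product of
its elements (in some order; the trace is independent of the order). -/
noncomputable def cliqueFlat {D : α → α → Prop} (w : List (Clique D)) : List α :=
  (w.map fun A => A.1.toList).flatten

/-- A trace language is level-regular if the set of Foata normal forms of its
elements is a regular word language over `I_D⁻`. -/
def LevelRegular (D : α → α → Prop) (L : Set (Trace D)) : Prop :=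
  Language.IsRegular
    {w : List (Clique D) | w ∈ Foata D ∧ Trace.mk D (cliqueFlat w) ∈ L}

/-- The alphabet `Σ = {a, b, c}`. -/
inductive ABC : Type
  | a | b | c
deriving DecidableEq

instance : Fintype ABC where
  elems := {ABC.a, ABC.b, ABC.c}
  complete := fun x => by cases x <;> simp

open scoped Pointwise

/-!
For `D = Eq` two words have the same trace iff they are permutations of each other, and a Foata
normal form is a chain `A₁ ⊇ A₂ ⊇ ⋯` of sets; its first set is the support of the trace, so
peeling it off shows that the Foata normal form is determined by the trace. Hence the Foata
normal forms of `[u*]`, for `u` a word of distinct letters, are the powers of the single clique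
`{u}`, a regular language. For `[(ab)*]·[(bc)*]` the condition on a trace is
`|t|_a + |t|_c = |t|_b`, so `{a,b,c}^m {b}^n` is a Foata normal form of an element iff `m = n`;
the prefixes `{a,b,c}^m` then have pairwise distinct left quotients, which contradicts
Myhill–Nerode.
-/

variable {α : Type*}

theorem TraceStep.perm {D : α → α → Prop} {u v : List α} (h : TraceStep D u v) :
    u.Perm v := by
  cases h with
  | swap x y a b _ => exact (List.Perm.refl x).append (List.Perm.swap b a y)

theorem TraceEquiv.perm {D : α → α → Prop} {u v : List α} (h : TraceEquiv D u v) :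
    u.Perm v := by
  induction h with
  | rel _ _ h => exact h.perm
  | refl => exact .refl _
  | symm _ _ _ ih => exact ih.symm
  | trans _ _ _ _ _ ih₁ ih₂ => exact ih₁.trans ih₂

theorem TraceEquiv.of_perm {D : α → α → Prop} (hD : ∀ a b : α, a ≠ b → ¬ D a b)
    {u v : List α} (h : u.Perm v) : TraceEquiv D u v := by
  induction h with
  | nil => exact .refl _
  | cons x _ ih => exact ih.append_left [x]
  | swap x y l =>
    by_cases hxy : y = x
    · rw [hxy]
      exact .refl _
    · exact .rel _ _ (TraceStep.swap [] l y x (hD _ _ hxy))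
  | trans _ _ ih₁ ih₂ => exact .trans _ _ _ ih₁ ih₂

theorem Trace.mk_eq_mk_iff_perm {D : α → α → Prop} (hD : ∀ a b : α, a ≠ b → ¬ D a b)
    {u v : List α} : Trace.mk D u = Trace.mk D v ↔ u.Perm v :=
  ⟨fun h => TraceEquiv.perm (Quotient.exact h), fun h => Quotient.sound (TraceEquiv.of_perm hD h)⟩

theorem List.Perm.flatten_replicate {u v : List α} (h : u.Perm v) (n : ℕ) :
    (List.replicate n u).flatten.Perm (List.replicate n v).flatten := by
  induction n with
  | zero => exact .refl _
  | succ n ih =>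
    simp only [List.replicate_succ, List.flatten_cons]
    exact h.append ih

theorem List.count_flatten_replicate [BEq α] (a : α) (n : ℕ) (u : List α) :
    (List.replicate n u).flatten.count a = n * u.count a := by
  rw [List.count_flatten, List.map_replicate, List.sum_replicate, smul_eq_mul]

theorem Finset.count_toList [DecidableEq α] (s : Finset α) (a : α) :
    s.toList.count a = if a ∈ s then 1 else 0 := by
  rw [← Multiset.coe_count, Finset.coe_toList, Multiset.count_eq_of_nodup s.nodup]
  rfl

section Clique

variable {D : α → α → Prop}

theorem cliqueFlat_cons (A : Clique D) (w : List (Clique D)) :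
    cliqueFlat (A :: w) = A.1.toList ++ cliqueFlat w := by
  simp [cliqueFlat]

theorem cliqueFlat_append (w v : List (Clique D)) :
    cliqueFlat (w ++ v) = cliqueFlat w ++ cliqueFlat v := by
  simp [cliqueFlat]

theorem cliqueFlat_replicate (n : ℕ) (A : Clique D) :
    cliqueFlat (List.replicate n A) = (List.replicate n A.1.toList).flatten := by
  simp [cliqueFlat, List.map_replicate]

theorem cliqueFlat_cons_ne_nil (A : Clique D) (w : List (Clique D)) : cliqueFlat (A :: w) ≠ [] := by
  obtain ⟨a, ha⟩ := A.2.1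
  exact List.ne_nil_of_mem (a := a) (by simp [cliqueFlat_cons, ha])

end Clique

def eqClique (s : Finset α) (hs : s.Nonempty) : Clique (Eq : α → α → Prop) :=
  ⟨s, hs, fun _ _ _ _ => id⟩

theorem rhd_eq_iff {A B : Clique (Eq : α → α → Prop)} : Rhd Eq A B ↔ B.1 ⊆ A.1 :=
  ⟨fun h b hb => by obtain ⟨a, ha, rfl⟩ := h b hb; exact ha, fun h b hb => ⟨b, h hb, rfl⟩⟩

theorem replicate_mem_foata (n : ℕ) (A : Clique (Eq : α → α → Prop)) :
    List.replicate n A ∈ Foata Eq :=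
  List.isChain_replicate_of_rel n (rhd_eq_iff.2 subset_rfl)

theorem replicate_append_replicate_mem_foata {A B : Clique (Eq : α → α → Prop)}
    (h : B.1 ⊆ A.1) (m n : ℕ) : List.replicate m A ++ List.replicate n B ∈ Foata Eq := by
  refine List.isChain_append.2 ⟨replicate_mem_foata m A, replicate_mem_foata n B, ?_⟩
  intro x hx y hy
  rw [List.eq_of_mem_replicate (List.mem_of_getLast? hx),
    List.eq_of_mem_replicate (List.mem_of_mem_head? hy)]
  exact rhd_eq_iff.2 h

theorem subset_of_cons_mem_foata :
    ∀ {A : Clique (Eq : α → α → Prop)} {w : List (Clique Eq)}, A :: w ∈ Foata Eq →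
      ∀ B ∈ w, B.1 ⊆ A.1
  | _, [], _, _, hB => absurd hB List.not_mem_nil
  | _, C :: _, h, B, hB => by
    obtain ⟨hAC, hC⟩ := List.isChain_cons_cons.1 h
    rcases List.mem_cons.1 hB with rfl | hB
    · exact rhd_eq_iff.1 hAC
    · exact (subset_of_cons_mem_foata hC B hB).trans (rhd_eq_iff.1 hAC)

theorem mem_cliqueFlat_cons_iff {A : Clique (Eq : α → α → Prop)} {w : List (Clique Eq)}
    (h : A :: w ∈ Foata Eq) (z : α) : z ∈ cliqueFlat (A :: w) ↔ z ∈ A.1 := by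
  simp only [cliqueFlat_cons, List.mem_append, Finset.mem_toList, or_iff_left_iff_imp]
  intro hz
  simp only [cliqueFlat, List.mem_flatten, List.mem_map] at hz
  obtain ⟨_, ⟨B, hB, rfl⟩, hzB⟩ := hz
  exact subset_of_cons_mem_foata h B hB (Finset.mem_toList.1 hzB)

theorem Foata.eq_of_perm :
    ∀ {w v : List (Clique (Eq : α → α → Prop))}, w ∈ Foata Eq → v ∈ Foata Eq →
      (cliqueFlat w).Perm (cliqueFlat v) → w = v
  | [], [], _, _, _ => rfl
  | [], B :: _, _, _, h => (cliqueFlat_cons_ne_nil B _ h.nil_eq.symm).elim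
  | A :: _, [], _, _, h => (cliqueFlat_cons_ne_nil A _ h.eq_nil).elim
  | A :: w, B :: v, hw, hv, h => by
    have hAB : A = B := Subtype.ext <| Finset.ext fun z => by
      rw [← mem_cliqueFlat_cons_iff hw, h.mem_iff, mem_cliqueFlat_cons_iff hv]
    subst hAB
    rw [cliqueFlat_cons, cliqueFlat_cons, List.perm_append_left_iff] at h
    exact congrArg (A :: ·) (Foata.eq_of_perm hw.tail hv.tail h)

def traceStar (D : α → α → Prop) (u : List α) : Set (Trace D) :=
  {t | ∃ n : ℕ, t = Trace.mk D (List.replicate n u).flatten}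

def foataPreimage (D : α → α → Prop) (L : Set (Trace D)) : Language (Clique D) :=
  {w | w ∈ Foata D ∧ Trace.mk D (cliqueFlat w) ∈ L}

theorem Language.isRegular_setOf_forall_mem (p : α → Prop) :
    Language.IsRegular ({w | ∀ a ∈ w, p a} : Language α) := by
  refine .of_finite_range_leftQuotient ((Set.toFinite {{w | ∀ a ∈ w, p a}, ∅}).subset ?_)
  rintro _ ⟨x, rfl⟩
  by_cases hx : ∀ a ∈ x, p a
  · left
    ext y
    show (∀ a ∈ x ++ y, p a) ↔ ∀ a ∈ y, p a
    simpa [or_imp, forall_and] using fun _ => hx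
  · right
    ext y
    show (∀ a ∈ x ++ y, p a) ↔ False
    exact iff_false_intro fun h => hx fun a ha => h a (List.mem_append_left y ha)

theorem Language.not_isRegular_of_replicate_append_mem_iff {L : Language α} {s t : α}
    (h : ∀ m n, List.replicate m s ++ List.replicate n t ∈ L ↔ m = n) : ¬ L.IsRegular := by
  intro hL
  have hinj : Function.Injective fun m => L.leftQuotient (List.replicate m s) := by
    intro m n hmn
    have hm : List.replicate m t ∈ L.leftQuotient (List.replicate m s) := (h m m).2 rfl
    rw [show L.leftQuotient (List.replicate m s) = _ from hmn] at hm
    exact ((h n m).1 hm).symm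
  exact Set.infinite_range_of_injective hinj
    (hL.finite_range_leftQuotient.subset (Set.range_subset_iff.2 fun _ => ⟨_, rfl⟩))

theorem foataPreimage_traceStar [DecidableEq α] {u : List α} (hu : u.Nodup) (hne : u ≠ []) :
    foataPreimage Eq (traceStar Eq u) =
      {w | ∀ A ∈ w, A = eqClique u.toFinset (List.toFinset_nonempty_iff u |>.2 hne)} := by
  set P := eqClique u.toFinset (List.toFinset_nonempty_iff u |>.2 hne)
  have hflat (n : ℕ) : (cliqueFlat (List.replicate n P)).Perm (List.replicate n u).flatten := by
    rw [cliqueFlat_replicate]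
    exact (List.perm_of_nodup_nodup_toFinset_eq P.1.nodup_toList hu
      (Finset.toList_toFinset _)).flatten_replicate n
  ext w
  constructor
  · rintro ⟨hw, n, hwn⟩
    have : w = List.replicate n P := Foata.eq_of_perm hw (replicate_mem_foata n P)
      (((Trace.mk_eq_mk_iff_perm (fun _ _ => id)).1 hwn).trans (hflat n).symm)
    subst this
    exact fun A hA => List.eq_of_mem_replicate hA
  · intro hw
    rw [List.eq_replicate_of_mem hw]
    exact ⟨replicate_mem_foata _ P, _, (Trace.mk_eq_mk_iff_perm (fun _ _ => id)).2 (hflat _)⟩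

theorem levelRegular_traceStar [DecidableEq α] {u : List α} (hu : u.Nodup) (hne : u ≠ []) :
    LevelRegular Eq (traceStar Eq u) := by
  unfold LevelRegular
  rw [← foataPreimage, foataPreimage_traceStar hu hne]
  exact Language.isRegular_setOf_forall_mem _

open ABC in
theorem mk_mem_traceStar_mul_traceStar_iff (u : List ABC) :
    Trace.mk Eq u ∈ traceStar Eq [a, b] * traceStar Eq [b, c] ↔
      u.count a + u.count c = u.count b := by
  rw [Set.mem_mul]
  constructor
  · rintro ⟨_, ⟨m, rfl⟩, _, ⟨n, rfl⟩, h⟩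
    rw [Trace.mk_mul, Trace.mk_eq_mk_iff_perm (fun _ _ => id)] at h
    simp only [← h.count_eq, List.count_append, List.count_flatten_replicate]
    simp
  · intro h
    refine ⟨_, ⟨u.count a, rfl⟩, _, ⟨u.count c, rfl⟩, ?_⟩
    rw [Trace.mk_mul, Trace.mk_eq_mk_iff_perm (fun _ _ => id), List.perm_iff_count]
    intro z
    cases z <;> simp [List.count_flatten_replicate, h]

open ABC in
theorem replicate_append_mem_foataPreimage_iff (m n : ℕ) :
    List.replicate m (eqClique {a, b, c} (Finset.insert_nonempty _ _)) ++
        List.replicate n (eqClique {b} (Finset.singleton_nonempty b)) ∈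
      foataPreimage Eq (traceStar Eq [a, b] * traceStar Eq [b, c]) ↔ m = n := by
  refine (and_iff_right (replicate_append_replicate_mem_foata (by decide) m n)).trans ?_
  rw [mk_mem_traceStar_mul_traceStar_iff]
  simp only [cliqueFlat_append, cliqueFlat_replicate, List.count_append,
    List.count_flatten_replicate, Finset.count_toList]
  simp [eqClique]

/-- with all distinct letters independent
(`D = {(a,a),(b,b),(c,c)}`, i.e. `D = Eq`), the trace languages `[(ab)*]`
and `[(bc)*]` are level-regular, but their concatenation
`[(ab)*]·[(bc)*]` is not level-regular. -/
theorem levelRegular_not_closed_concat :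
    LevelRegular (Eq : ABC → ABC → Prop)
      {t | ∃ n : ℕ, t = Trace.mk Eq ((List.replicate n [ABC.a, ABC.b]).flatten)} ∧
    LevelRegular (Eq : ABC → ABC → Prop)
      {t | ∃ n : ℕ, t = Trace.mk Eq ((List.replicate n [ABC.b, ABC.c]).flatten)} ∧
    ¬ LevelRegular (Eq : ABC → ABC → Prop)
      ({t | ∃ n : ℕ, t = Trace.mk Eq ((List.replicate n [ABC.a, ABC.b]).flatten)} *
       {t | ∃ n : ℕ, t = Trace.mk Eq ((List.replicate n [ABC.b, ABC.c]).flatten)}) :=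
  ⟨levelRegular_traceStar (by decide) (List.cons_ne_nil _ _),
    levelRegular_traceStar (by decide) (List.cons_ne_nil _ _),
    Language.not_isRegular_of_replicate_append_mem_iff replicate_append_mem_foataPreimage_iff⟩
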